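/- arXiv:2511.20125 — 3 statements merged into one kernel-verified Lean document; each statement's English description precedes it below -/
import Mathlib

section
/- Let G and G' be edge-neighboring graphs on V with G ⊆ G' (G' is G with one additional edge), and let τ ∈ ℕ. Then the edge distance between the clipped graphs satisfies d_edge(Clip(G, τ), Clip(G', τ)) ≤ 3. -/
open scoped symmDiff

variable {V : Type*}

noncomputable section

/-- Degree of a vertex `v` in `G`. -/
def deg [Fintype V] (G : SimpleGraph V) (v : V) : ℕ :=
  (G.neighborSet v).ncard

/-- Maximum degree of `G`. -/
def maxDeg [Fintype V] (G : SimpleGraph V) : ℕ :=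
  Finset.univ.sup (deg G)

/-- Number of vertices of `G` with degree at least `τ`. -/
def Ntau [Fintype V] (G : SimpleGraph V) (τ : ℕ) : ℕ :=
  {v : V | τ ≤ deg G v}.ncard

/-- Edge distance: the number of edges in the symmetric difference of the edge sets. -/
def edgeDist (G G' : SimpleGraph V) : ℕ :=
  (G.edgeSet ∆ G'.edgeSet).ncard

/-- Lexicographic key of an edge: the unordered pair written with its smaller endpoint first,
compared lexicographically. -/
def edgeKey [LinearOrder V] (e : Sym2 V) : Lex (V × V) :=
  Sym2.lift ⟨fun a b => toLex (min a b, max a b), fun a b => by simp only []; rw [min_comm, max_comm]⟩ e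

/-- `e` is among the `τ` smallest edges (in the fixed lexicographic order) incident to `v`
in `G`. -/
def clipKeep [Fintype V] [LinearOrder V] (G : SimpleGraph V) (τ : ℕ) (v : V)
    (e : Sym2 V) : Prop :=
  {e' ∈ G.incidenceSet v | edgeKey e' ≤ edgeKey e}.ncard ≤ τ

/-- The clipped graph `Clip G τ`: an edge of `G` is retained iff, for each of its two
endpoints `v`, it is among the `τ` smallest edges incident to `v` in `G`. -/
def Clip [Fintype V] [LinearOrder V] (G : SimpleGraph V) (τ : ℕ) : SimpleGraph V where
  Adj a b := G.Adj a b ∧ clipKeep G τ a s(a, b) ∧ clipKeep G τ b s(a, b)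
  symm := by
    constructor
    intro a b h
    refine ⟨h.1.symm, ?_, ?_⟩
    · rw [Sym2.eq_swap]; exact h.2.2
    · rw [Sym2.eq_swap]; exact h.2.1
  loopless := ⟨fun a h => G.irrefl h.1⟩

/-- Naive clipping: delete every edge having at least one endpoint of degree `> τ` in `G`. -/
def NaiveClip [Fintype V] (G : SimpleGraph V) (τ : ℕ) : SimpleGraph V where
  Adj a b := G.Adj a b ∧ deg G a ≤ τ ∧ deg G b ≤ τ
  symm := ⟨fun _ _ h => ⟨h.1.symm, h.2.2, h.2.1⟩⟩
  loopless := ⟨fun a h => G.irrefl h.1⟩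

/-- The graph obtained from `G` by deleting all vertices in `S` together with their
incident edges. -/
def deleteVerts (G : SimpleGraph V) (S : Set V) : SimpleGraph V where
  Adj a b := G.Adj a b ∧ a ∉ S ∧ b ∉ S
  symm := ⟨fun _ _ h => ⟨h.1.symm, h.2.2, h.2.1⟩⟩
  loopless := ⟨fun a h => G.irrefl h.1⟩

/-- `DelN G τ`: the minimum cardinality of a vertex set whose deletion bounds the maximum
degree of `G` by `τ`. (The paper's `Q_Del-N(G, τ)` equals `-DelN G τ`.) -/
def DelN [Fintype V] (G : SimpleGraph V) (τ : ℕ) : ℕ :=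
  sInf {n | ∃ S : Set V, S.ncard = n ∧ maxDeg (deleteVerts G S) ≤ τ}

/-- Total excess of vertex degrees over `τ`. (The paper's `Q_Del-Deg(G, τ)` equals
`-fExcess G τ / 2`.) -/
def fExcess [Fintype V] (G : SimpleGraph V) (τ : ℕ) : ℕ :=
  ∑ v, (deg G v - τ)

/-- A `τ`-feasible pair `(x, y)` for the LP relaxation of node deletion. -/
structure IsFeasible [Fintype V] (G : SimpleGraph V) (τ : ℕ) (x : V → ℝ)
    (y : Sym2 V → ℝ) : Prop where
  x_mem : ∀ v, x v ∈ Set.Icc (0 : ℝ) 1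
  y_mem : ∀ e ∈ G.edgeSet, y e ∈ Set.Icc (0 : ℝ) 1
  edge_cons : ∀ a b, G.Adj a b → 1 - x a - x b ≤ y s(a, b)
  deg_cons : ∀ v, ∑ᶠ e ∈ G.incidenceSet v, y e ≤ (τ : ℝ)

/-- The LP value: infimum of `Σ_v x_v` over all `τ`-feasible pairs.
(The paper's `Q_LP-Del-N(G, τ)` equals `-LPDelN G τ`.) -/
def LPDelN [Fintype V] (G : SimpleGraph V) (τ : ℕ) : ℝ :=
  sInf {t : ℝ | ∃ x y, IsFeasible G τ x y ∧ t = ∑ v, x v}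
/-! Adding the edge `e₀` to `G` can only remove edges from the clipping and add `e₀` itself:
incidence sets only grow, and they change only at the two endpoints of `e₀`. At an endpoint `v`,
an edge of `Clip G τ` that is dropped from `Clip G' τ` must have exactly `τ` edges of `G` at `v`
up to its key, and since these counts are strictly increasing in the (injective) key, at most one
edge is dropped at each endpoint. -/

section Clip

variable [LinearOrder V]

theorem edgeKey_injective : Function.Injective (edgeKey : Sym2 V → Lex (V × V)) := by
  have key_mk (x y : V) : edgeKey s(x, y) = toLex (min x y, max x y) := rfl
  have mk_min_max (x y : V) : s(min x y, max x y) = s(x, y) := by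
    rcases le_total x y with h | h
    · rw [min_eq_left h, max_eq_right h]
    · rw [min_eq_right h, max_eq_left h, Sym2.eq_swap]
  intro e e' h
  induction e using Sym2.ind with | _ a b =>
  induction e' using Sym2.ind with | _ c d =>
  rw [key_mk, key_mk, toLex_inj, Prod.mk.injEq] at h
  rw [← mk_min_max a b, ← mk_min_max c d, h.1, h.2]

/-- `clipKeep G τ v e` unfolds to `(edgesBelow G v e).ncard ≤ τ`. -/
def edgesBelow (G : SimpleGraph V) (v : V) (e : Sym2 V) : Set (Sym2 V) :=
  {e' ∈ G.incidenceSet v | edgeKey e' ≤ edgeKey e}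

theorem edgesBelow_mono {G G' : SimpleGraph V} (h : G ≤ G') (v : V) (e : Sym2 V) :
    edgesBelow G v e ⊆ edgesBelow G' v e :=
  fun _ he' => ⟨⟨SimpleGraph.edgeSet_mono h he'.1.1, he'.1.2⟩, he'.2⟩

theorem edgesBelow_subset_insert {G G' : SimpleGraph V} {e₀ : Sym2 V}
    (hG' : G'.edgeSet = insert e₀ G.edgeSet) (v : V) (e : Sym2 V) :
    edgesBelow G' v e ⊆ insert e₀ (edgesBelow G v e) := by
  rintro e' ⟨⟨he', hv⟩, hkey⟩
  rw [hG'] at he'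
  rcases he' with rfl | he'
  · exact Set.mem_insert _ _
  · exact Set.mem_insert_of_mem _ ⟨⟨he', hv⟩, hkey⟩

theorem edgesBelow_eq_of_notMem {G G' : SimpleGraph V} {e₀ : Sym2 V}
    (hG' : G'.edgeSet = insert e₀ G.edgeSet) {v : V} (hv : v ∉ e₀) (e : Sym2 V) :
    edgesBelow G' v e = edgesBelow G v e := by
  ext e'
  simp only [edgesBelow, SimpleGraph.incidenceSet, hG', Set.mem_ofPred_eq, Set.mem_insert_iff]
  constructor
  · rintro ⟨⟨rfl | he', hv'⟩, hkey⟩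
    · exact absurd hv' hv
    · exact ⟨⟨he', hv'⟩, hkey⟩
  · rintro ⟨⟨he', hv'⟩, hkey⟩
    exact ⟨⟨Or.inr he', hv'⟩, hkey⟩

variable [Fintype V]

theorem ncard_edgesBelow_lt {G : SimpleGraph V} {v : V} {e f : Sym2 V}
    (hf : f ∈ G.incidenceSet v) (hlt : edgeKey e < edgeKey f) :
    (edgesBelow G v e).ncard < (edgesBelow G v f).ncard := by
  refine Set.ncard_lt_ncard <| (Set.ssubset_iff_of_subset ?_).mpr ⟨f, ⟨hf, le_rfl⟩, ?_⟩
  · exact fun _ he' => ⟨he'.1, he'.2.trans hlt.le⟩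
  · exact fun hf' => hlt.not_ge hf'.2

theorem mem_edgeSet_clip {G : SimpleGraph V} {τ : ℕ} {e : Sym2 V} :
    e ∈ (Clip G τ).edgeSet ↔ e ∈ G.edgeSet ∧ ∀ v ∈ e, clipKeep G τ v e := by
  induction e using Sym2.ind with | _ a b =>
  simp only [SimpleGraph.mem_edgeSet, Sym2.mem_iff, forall_eq_or_imp, forall_eq]
  rfl

theorem clipKeep.of_le {G G' : SimpleGraph V} (h : G ≤ G') {τ : ℕ} {v : V} {e : Sym2 V}
    (hkeep : clipKeep G' τ v e) : clipKeep G τ v e :=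
  (Set.ncard_le_ncard (edgesBelow_mono h v e)).trans hkeep

def droppedAt (G G' : SimpleGraph V) (τ : ℕ) (v : V) : Set (Sym2 V) :=
  {e ∈ G.incidenceSet v | clipKeep G τ v e ∧ ¬ clipKeep G' τ v e}

theorem ncard_edgesBelow_eq_of_mem_droppedAt {G G' : SimpleGraph V} {e₀ : Sym2 V}
    (hG' : G'.edgeSet = insert e₀ G.edgeSet) {τ : ℕ} {v : V} {e : Sym2 V}
    (he : e ∈ droppedAt G G' τ v) : (edgesBelow G v e).ncard = τ := by
  obtain ⟨-, hkeep, hdrop⟩ := he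
  have hgrow : (edgesBelow G' v e).ncard ≤ (edgesBelow G v e).ncard + 1 :=
    (Set.ncard_le_ncard (edgesBelow_subset_insert hG' v e)).trans (Set.ncard_insert_le _ _)
  have hkeep : (edgesBelow G v e).ncard ≤ τ := hkeep
  have hdrop : τ < (edgesBelow G' v e).ncard := not_le.mp hdrop
  omega

theorem droppedAt_subsingleton {G G' : SimpleGraph V} {e₀ : Sym2 V}
    (hG' : G'.edgeSet = insert e₀ G.edgeSet) (τ : ℕ) (v : V) :
    (droppedAt G G' τ v).Subsingleton := by
  intro e he f hf
  have hcount := (ncard_edgesBelow_eq_of_mem_droppedAt hG' he).trans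
    (ncard_edgesBelow_eq_of_mem_droppedAt hG' hf).symm
  rcases lt_trichotomy (edgeKey e) (edgeKey f) with hlt | heq | hgt
  · exact absurd hcount (ncard_edgesBelow_lt hf.1 hlt).ne
  · exact edgeKey_injective heq
  · exact absurd hcount (ncard_edgesBelow_lt he.1 hgt).ne'

theorem edgeSet_clip_diff_subset_singleton {G G' : SimpleGraph V} {e₀ : Sym2 V}
    (hG' : G'.edgeSet = insert e₀ G.edgeSet) (τ : ℕ) :
    (Clip G' τ).edgeSet \ (Clip G τ).edgeSet ⊆ {e₀} := by
  have hle : G ≤ G' := SimpleGraph.edgeSet_subset_edgeSet.mp (hG' ▸ Set.subset_insert _ _)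
  rintro e ⟨he', he⟩
  rw [mem_edgeSet_clip, hG'] at he'
  obtain ⟨rfl | heG, hkeep⟩ := he'
  · rfl
  · exact absurd (mem_edgeSet_clip.mpr ⟨heG, fun v hv => (hkeep v hv).of_le hle⟩) he

theorem edgeSet_clip_diff_subset_droppedAt {G G' : SimpleGraph V} {a b : V}
    (hG' : G'.edgeSet = insert s(a, b) G.edgeSet) (τ : ℕ) :
    (Clip G τ).edgeSet \ (Clip G' τ).edgeSet ⊆ droppedAt G G' τ a ∪ droppedAt G G' τ b := by
  rintro e ⟨he, he'⟩
  obtain ⟨heG, hkeep⟩ := mem_edgeSet_clip.mp he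
  have heG' : e ∈ G'.edgeSet := hG' ▸ Set.mem_insert_of_mem _ heG
  obtain ⟨v, hv, hdrop⟩ : ∃ v ∈ e, ¬ clipKeep G' τ v e := by
    by_contra! hall
    exact he' (mem_edgeSet_clip.mpr ⟨heG', hall⟩)
  have hvab : v ∈ s(a, b) := by
    by_contra hvab
    exact hdrop (show (edgesBelow G' v e).ncard ≤ τ from
      edgesBelow_eq_of_notMem hG' hvab e ▸ hkeep v hv)
  have hmem : e ∈ droppedAt G G' τ v := ⟨⟨heG, hv⟩, hkeep v hv, hdrop⟩
  rcases Sym2.mem_iff.mp hvab with rfl | rfl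
  · exact Or.inl hmem
  · exact Or.inr hmem

end Clip

theorem clip_edgeDist_le_three_of_edgeNeighboring_general [Fintype V] [LinearOrder V]
    (G G' : SimpleGraph V) (e₀ : Sym2 V) (τ : ℕ)
    (hG' : G'.edgeSet = insert e₀ G.edgeSet) :
    edgeDist (Clip G τ) (Clip G' τ) ≤ 3 := by
  induction e₀ using Sym2.ind with | _ a b =>
  have hsub : (Clip G τ).edgeSet ∆ (Clip G' τ).edgeSet ⊆
      insert s(a, b) (droppedAt G G' τ a ∪ droppedAt G G' τ b) := by
    rw [Set.symmDiff_def, Set.insert_eq, Set.union_comm {s(a, b)}]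
    exact Set.union_subset_union (edgeSet_clip_diff_subset_droppedAt hG' τ)
      (edgeSet_clip_diff_subset_singleton hG' τ)
  have hdropped (v : V) : (droppedAt G G' τ v).ncard ≤ 1 :=
    Set.ncard_le_one_iff_subsingleton.mpr (droppedAt_subsingleton hG' τ v)
  calc edgeDist (Clip G τ) (Clip G' τ)
      ≤ (insert s(a, b) (droppedAt G G' τ a ∪ droppedAt G G' τ b)).ncard :=
        Set.ncard_le_ncard hsub
    _ ≤ (droppedAt G G' τ a).ncard + (droppedAt G G' τ b).ncard + 1 :=
        (Set.ncard_insert_le _ _).trans (Nat.add_le_add_right (Set.ncard_union_le _ _) 1)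
    _ ≤ 3 := by linarith [hdropped a, hdropped b]

/-- For edge-neighboring graphs `G ⊆ G'` (one extra edge `e₀`), the edge
distance between the clipped graphs is at most `3`. -/
theorem clip_edgeDist_le_three_of_edgeNeighboring [Fintype V] [LinearOrder V]
    (G G' : SimpleGraph V) (e₀ : Sym2 V) (τ : ℕ)
    (he₀ : e₀ ∉ G.edgeSet)
    (hG' : G'.edgeSet = insert e₀ G.edgeSet) :
    edgeDist (Clip G τ) (Clip G' τ) ≤ 3 :=
  clip_edgeDist_le_three_of_edgeNeighboring_general G G' e₀ τ hG'

end
end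

section
/- Let τ ≥ 1 be a natural number and let G and G' be edge-neighboring graphs on V with G ⊆ G' (G' is G with one additional edge). Then the edge distance between the naively clipped graphs satisfies d_edge(NaiveClip(G, τ), NaiveClip(G', τ)) ≤ 2τ. -/
open scoped symmDiff

variable {V : Type*}

noncomputable section

/-! Adding the edge `e₀` raises the degrees of its two endpoints by one and no other degree.
An edge of `NaiveClip G τ` can therefore only disappear from `NaiveClip G' τ` through an endpoint
of `e₀` whose degree jumps from `τ` to `τ + 1`, and each such endpoint carries exactly `τ` edges;
the only edge that can appear is `e₀` itself, and it does so only when both of its endpoints have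
degree `< τ` in `G`, in which case nothing disappears. -/

section

variable {G G' : SimpleGraph V} {τ : ℕ} {e e₀ : Sym2 V} {v : V}

theorem incidenceSet_of_edgeSet_eq_insert_of_mem (hG' : G'.edgeSet = insert e₀ G.edgeSet)
    (hv : v ∈ e₀) : G'.incidenceSet v = insert e₀ (G.incidenceSet v) := by
  ext e
  simp only [SimpleGraph.incidenceSet, hG', Set.mem_ofPred_eq, Set.mem_insert_iff]
  grind

theorem incidenceSet_of_edgeSet_eq_insert_of_notMem (hG' : G'.edgeSet = insert e₀ G.edgeSet)
    (hv : v ∉ e₀) : G'.incidenceSet v = G.incidenceSet v := by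
  ext e
  simp only [SimpleGraph.incidenceSet, hG', Set.mem_ofPred_eq, Set.mem_insert_iff]
  grind

theorem le_of_edgeSet_eq_insert (hG' : G'.edgeSet = insert e₀ G.edgeSet) : G ≤ G' :=
  SimpleGraph.edgeSet_subset_edgeSet.1 (hG' ▸ Set.subset_insert _ _)

variable [Fintype V]

theorem mem_edgeSet_naiveClip :
    e ∈ (NaiveClip G τ).edgeSet ↔ e ∈ G.edgeSet ∧ ∀ v ∈ e, deg G v ≤ τ := by
  induction e using Sym2.ind with
  | _ a b => simp only [SimpleGraph.mem_edgeSet, Sym2.mem_iff, forall_eq_or_imp, forall_eq]; rfl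

theorem ncard_incidenceSet (G : SimpleGraph V) (v : V) :
    (G.incidenceSet v).ncard = deg G v := by
  classical
  exact Nat.card_congr (G.incidenceSetEquivNeighborSet v)

theorem deg_mono (h : G ≤ G') (v : V) : deg G v ≤ deg G' v :=
  Set.ncard_le_ncard fun _ hw => h hw

theorem deg_of_edgeSet_eq_insert_of_mem (hG' : G'.edgeSet = insert e₀ G.edgeSet)
    (he₀ : e₀ ∉ G.edgeSet) (hv : v ∈ e₀) : deg G' v = deg G v + 1 := by
  rw [← ncard_incidenceSet, ← ncard_incidenceSet,
    incidenceSet_of_edgeSet_eq_insert_of_mem hG' hv, Set.ncard_insert_of_notMem fun h => he₀ h.1]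

theorem deg_of_edgeSet_eq_insert_of_notMem (hG' : G'.edgeSet = insert e₀ G.edgeSet)
    (hv : v ∉ e₀) : deg G' v = deg G v := by
  rw [← ncard_incidenceSet, ← ncard_incidenceSet,
    incidenceSet_of_edgeSet_eq_insert_of_notMem hG' hv]

theorem exists_deg_le_lt_of_mem_naiveClip_sdiff (h : G ≤ G')
    (he : e ∈ (NaiveClip G τ).edgeSet \ (NaiveClip G' τ).edgeSet) :
    ∃ v ∈ e, e ∈ G.incidenceSet v ∧ deg G v ≤ τ ∧ τ < deg G' v := by
  simp only [Set.mem_sdiff, mem_edgeSet_naiveClip, not_and, not_forall, not_le] at he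
  obtain ⟨⟨heG, hlow⟩, hhigh⟩ := he
  obtain ⟨v, hv, hτv⟩ := hhigh (SimpleGraph.edgeSet_subset_edgeSet.2 h heG)
  exact ⟨v, hv, ⟨heG, hv⟩, hlow v hv, hτv⟩

theorem notMem_edgeSet_of_mem_naiveClip_sdiff (h : G ≤ G')
    (he : e ∈ (NaiveClip G' τ).edgeSet \ (NaiveClip G τ).edgeSet) : e ∉ G.edgeSet := by
  simp only [Set.mem_sdiff, mem_edgeSet_naiveClip, not_and] at he
  exact fun heG => he.2 heG fun v hv => (deg_mono h v).trans (he.1.2 v hv)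

theorem ncard_setOf_deg_eq_and_mem_incidenceSet_le (G : SimpleGraph V) (τ : ℕ) (v : V) :
    {e | deg G v = τ ∧ e ∈ G.incidenceSet v}.ncard ≤ τ := by
  by_cases hv : deg G v = τ
  · simp only [hv, true_and, Set.ofPred_mem_eq, ncard_incidenceSet, le_refl]
  · simp [hv]

theorem ncard_setOf_exists_deg_eq_and_mem_incidenceSet_le (G : SimpleGraph V) (τ : ℕ)
    (e₀ : Sym2 V) : {e | ∃ v ∈ e₀, deg G v = τ ∧ e ∈ G.incidenceSet v}.ncard ≤ 2 * τ := by
  induction e₀ using Sym2.ind with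
  | _ a b =>
  calc {e | ∃ v ∈ s(a, b), deg G v = τ ∧ e ∈ G.incidenceSet v}.ncard
      = ({e | deg G a = τ ∧ e ∈ G.incidenceSet a} ∪
          {e | deg G b = τ ∧ e ∈ G.incidenceSet b}).ncard := by
        congr 1; ext e; simp [Sym2.mem_iff, or_and_right, exists_or]
    _ ≤ τ + τ := (Set.ncard_union_le _ _).trans (add_le_add
        (ncard_setOf_deg_eq_and_mem_incidenceSet_le G τ a)
        (ncard_setOf_deg_eq_and_mem_incidenceSet_le G τ b))
    _ = 2 * τ := (two_mul τ).symm

theorem naiveClip_sdiff_subset_of_edgeSet_eq_insert (hG' : G'.edgeSet = insert e₀ G.edgeSet)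
    (he₀ : e₀ ∉ G.edgeSet) : (NaiveClip G τ).edgeSet \ (NaiveClip G' τ).edgeSet ⊆
      {e | ∃ v ∈ e₀, deg G v = τ ∧ e ∈ G.incidenceSet v} := by
  intro e he
  obtain ⟨v, -, hev, hle, hlt⟩ :=
    exists_deg_le_lt_of_mem_naiveClip_sdiff (le_of_edgeSet_eq_insert hG') he
  by_cases hv : v ∈ e₀
  · rw [deg_of_edgeSet_eq_insert_of_mem hG' he₀ hv] at hlt
    exact ⟨v, hv, by omega, hev⟩
  · rw [deg_of_edgeSet_eq_insert_of_notMem hG' hv] at hlt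
    omega

theorem naiveClip_sdiff_subset_singleton_of_edgeSet_eq_insert
    (hG' : G'.edgeSet = insert e₀ G.edgeSet) :
    (NaiveClip G' τ).edgeSet \ (NaiveClip G τ).edgeSet ⊆ {e₀} := by
  intro e he
  have heG' : e ∈ insert e₀ G.edgeSet := hG' ▸ (mem_edgeSet_naiveClip.1 he.1).1
  exact heG'.resolve_right <|
    notMem_edgeSet_of_mem_naiveClip_sdiff (le_of_edgeSet_eq_insert hG') he

theorem deg_lt_of_mem_edgeSet_naiveClip (hG' : G'.edgeSet = insert e₀ G.edgeSet)
    (he₀ : e₀ ∉ G.edgeSet) (h : e₀ ∈ (NaiveClip G' τ).edgeSet) : ∀ v ∈ e₀, deg G v < τ := by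
  intro v hv
  have := (mem_edgeSet_naiveClip.1 h).2 v hv
  rw [deg_of_edgeSet_eq_insert_of_mem hG' he₀ hv] at this
  omega

end

theorem naiveClip_edgeDist_le_of_edgeNeighboring_general [Fintype V]
    (G G' : SimpleGraph V) (e₀ : Sym2 V) (τ : ℕ)
    (he₀ : e₀ ∉ G.edgeSet)
    (hG' : G'.edgeSet = insert e₀ G.edgeSet) :
    edgeDist (NaiveClip G τ) (NaiveClip G' τ) ≤ 2 * τ := by
  have hlost := naiveClip_sdiff_subset_of_edgeSet_eq_insert (τ := τ) hG' he₀
  have hgained := naiveClip_sdiff_subset_singleton_of_edgeSet_eq_insert (τ := τ) hG'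
  rw [edgeDist, Set.symmDiff_def]
  refine (Set.ncard_union_le _ _).trans ?_
  by_cases he₀' : e₀ ∈ (NaiveClip G' τ).edgeSet
  · have hlow := deg_lt_of_mem_edgeSet_naiveClip hG' he₀ he₀'
    have hnone_lost : (NaiveClip G τ).edgeSet \ (NaiveClip G' τ).edgeSet = ∅ :=
      Set.subset_empty_iff.1 fun e he =>
        let ⟨v, hv, hdeg, _⟩ := hlost he
        (hlow v hv).ne hdeg
    obtain ⟨a, ha⟩ : ∃ a, a ∈ e₀ := ⟨_, e₀.out_fst_mem⟩
    rw [hnone_lost, Set.ncard_empty, zero_add]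
    calc _ ≤ ({e₀} : Set (Sym2 V)).ncard := Set.ncard_le_ncard hgained
      _ ≤ 2 * τ := by rw [Set.ncard_singleton]; have := hlow a ha; omega
  · have hnone_gained : (NaiveClip G' τ).edgeSet \ (NaiveClip G τ).edgeSet = ∅ :=
      Set.subset_empty_iff.1 fun e he =>
        he₀' (Set.mem_singleton_iff.1 (hgained he) ▸ he.1)
    rw [hnone_gained, Set.ncard_empty, add_zero]
    exact (Set.ncard_le_ncard hlost).trans
      (ncard_setOf_exists_deg_eq_and_mem_incidenceSet_le G τ e₀)

/-- For `τ ≥ 1` and edge-neighboring graphs `G ⊆ G'` (one extra edge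
`e₀`), the edge distance between the naively clipped graphs is at most `2τ`. -/
theorem naiveClip_edgeDist_le_of_edgeNeighboring [Fintype V]
    (G G' : SimpleGraph V) (e₀ : Sym2 V) (τ : ℕ) (hτ : 1 ≤ τ)
    (he₀ : e₀ ∉ G.edgeSet)
    (hG' : G'.edgeSet = insert e₀ G.edgeSet) :
    edgeDist (NaiveClip G τ) (NaiveClip G' τ) ≤ 2 * τ :=
  naiveClip_edgeDist_le_of_edgeNeighboring_general G G' e₀ τ he₀ hG'

end
end

section
/- Let G and G' be node-neighboring graphs on V with G ⊆ G', differing at a vertex u, and let τ ∈ ℕ. Then DelN(G, τ) ≤ DelN(G', τ) ≤ DelN(G, τ) + 1. (Equivalently, the paper's query Q_Del-N = −DelN has global sensitivity 1 under node-level neighboring and is sensitivity-monotonic: Q_Del-N(G, τ) ≥ Q_Del-N(G', τ) when G ⊆ G'.) -/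
open scoped symmDiff

variable {V : Type*}

noncomputable section

lemma deleteVerts_mono {G G' : SimpleGraph V} (h : G ≤ G') (S : Set V) :
    deleteVerts G S ≤ deleteVerts G' S :=
  fun _ _ hab => ⟨h hab.1, hab.2⟩

lemma deleteVerts_insert_le {G G' : SimpleGraph V} {u : V}
    (hdiff : ∀ e ∈ G'.edgeSet, e ∉ G.edgeSet → u ∈ e) (S : Set V) :
    deleteVerts G' (insert u S) ≤ deleteVerts G S := by
  rintro a b ⟨hadj, ha, hb⟩
  rw [Set.mem_insert_iff, not_or] at ha hb
  refine ⟨?_, ha.2, hb.2⟩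
  by_contra hG
  rcases Sym2.mem_iff.mp (hdiff s(a, b) hadj hG) with rfl | rfl
  exacts [ha.1 rfl, hb.1 rfl]

section DeletionNumber

variable [Fintype V]

lemma maxDeg_mono {H H' : SimpleGraph V} (h : H ≤ H') : maxDeg H ≤ maxDeg H' :=
  Finset.sup_mono_fun fun _ _ => Set.ncard_le_ncard (fun _ hw => h hw) (Set.toFinite _)

lemma maxDeg_deleteVerts_univ (G : SimpleGraph V) : maxDeg (deleteVerts G Set.univ) = 0 := by
  have hdeg : ∀ v, deg (deleteVerts G Set.univ) v = 0 := fun v => by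
    simp [deg, deleteVerts, SimpleGraph.neighborSet]
  simp [maxDeg, hdeg]

lemma delN_le_ncard {G : SimpleGraph V} {τ : ℕ} {S : Set V} (hS : maxDeg (deleteVerts G S) ≤ τ) :
    DelN G τ ≤ S.ncard :=
  Nat.sInf_le ⟨S, rfl, hS⟩

lemma exists_ncard_eq_delN (G : SimpleGraph V) (τ : ℕ) :
    ∃ S : Set V, S.ncard = DelN G τ ∧ maxDeg (deleteVerts G S) ≤ τ :=
  Nat.sInf_mem (s := {n | ∃ S : Set V, S.ncard = n ∧ maxDeg (deleteVerts G S) ≤ τ})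
    ⟨_, Set.univ, rfl, (maxDeg_deleteVerts_univ G).trans_le τ.zero_le⟩

lemma delN_mono {G G' : SimpleGraph V} (h : G ≤ G') (τ : ℕ) : DelN G τ ≤ DelN G' τ := by
  obtain ⟨S, hcard, hS⟩ := exists_ncard_eq_delN G' τ
  exact hcard ▸ delN_le_ncard ((maxDeg_mono (deleteVerts_mono h S)).trans hS)

lemma delN_le_delN_add_one {G G' : SimpleGraph V} {u : V}
    (hdiff : ∀ e ∈ G'.edgeSet, e ∉ G.edgeSet → u ∈ e) (τ : ℕ) :
    DelN G' τ ≤ DelN G τ + 1 := by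
  obtain ⟨S, hcard, hS⟩ := exists_ncard_eq_delN G τ
  calc DelN G' τ ≤ (insert u S).ncard :=
        delN_le_ncard ((maxDeg_mono (deleteVerts_insert_le hdiff S)).trans hS)
    _ ≤ DelN G τ + 1 := hcard ▸ Set.ncard_insert_le u S

end DeletionNumber

/-- For node-neighboring graphs `G ⊆ G'` differing at `u`,
`DelN(G, τ) ≤ DelN(G', τ) ≤ DelN(G, τ) + 1`: the query `Q_Del-N = -DelN` has global
sensitivity `1` under node-level neighboring and is sensitivity-monotonic. -/
theorem delN_sensitivity [Fintype V]
    (G G' : SimpleGraph V) (u : V) (τ : ℕ)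
    (hsub : G ≤ G')
    (hdiff : ∀ e ∈ G'.edgeSet, e ∉ G.edgeSet → u ∈ e) :
    DelN G τ ≤ DelN G' τ ∧ DelN G' τ ≤ DelN G τ + 1 :=
  ⟨delN_mono hsub τ, delN_le_delN_add_one hdiff τ⟩

end
end
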